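/- Let N ≥ 1 and 1 ≤ r ≤ N. Let M⋆ = U⋆ Λ⋆ U⋆ᵀ ∈ ℝ^{N×N} be symmetric of rank r, with U⋆ ∈ ℝ^{N×r} having orthonormal columns, U⋆⊥ ∈ ℝ^{N×(N−r)} an orthonormal complement of U⋆, and Λ⋆ ∈ ℝ^{r×r} diagonal and invertible. Let U ∈ ℝ^{N×r} have orthonormal columns and let E ∈ ℝ^{N×N} satisfy σ_r(M⋆)·σ_r(U⋆ᵀU) − ‖E‖₂ > 0. Set A = (M⋆ + E)·U. Then U⋆ᵀA is invertible and ‖U⋆⊥ᵀ A (U⋆ᵀ A)^{-1}‖₂ ≤ ‖E‖₂ / (σ_r(M⋆)·σ_r(U⋆ᵀU) − ‖E‖₂). Moreover, if in addition σ_r(U⋆ᵀU) ≥ 1/√5 and ‖E‖₂ ≤ σ_r(M⋆)/(2√5), then ‖U⋆⊥ᵀ A (U⋆ᵀ A)^{-1}‖₂ ≤ 2√5·‖E‖₂ / σ_r(M⋆). -/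
import Mathlib

open Matrix BigOperators

/-- Euclidean norm of a real vector. -/
noncomputable def vnorm {n : ℕ} (v : Fin n → ℝ) : ℝ := Real.sqrt (∑ i, v i ^ 2)

namespace VN
variable {m n p : ℕ}

lemma sumsq_nonneg (x : Fin n → ℝ) : 0 ≤ ∑ i, x i ^ 2 :=
  Finset.sum_nonneg fun i _ => sq_nonneg _

lemma vnorm_nonneg (x : Fin n → ℝ) : 0 ≤ vnorm x := Real.sqrt_nonneg _

lemma vnorm_sq (x : Fin n → ℝ) : vnorm x ^ 2 = ∑ i, x i ^ 2 :=
  Real.sq_sqrt (sumsq_nonneg x)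

lemma dot_self (x : Fin n → ℝ) : x ⬝ᵥ x = ∑ i, x i ^ 2 := by
  simp [dotProduct, sq]

lemma vnorm_eq_sqrt_dot (x : Fin n → ℝ) : vnorm x = Real.sqrt (x ⬝ᵥ x) := by
  rw [dot_self]; rfl

lemma dot_le (x y : Fin n → ℝ) : x ⬝ᵥ y ≤ vnorm x * vnorm y := by
  have h := Finset.sum_mul_sq_le_sq_mul_sq Finset.univ x y
  have h2 : x ⬝ᵥ y ≤ |x ⬝ᵥ y| := le_abs_self _
  have h3 : |x ⬝ᵥ y| = Real.sqrt ((x ⬝ᵥ y) ^ 2) := (Real.sqrt_sq_eq_abs _).symm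
  calc x ⬝ᵥ y ≤ Real.sqrt ((x ⬝ᵥ y) ^ 2) := by rw [← h3]; exact h2
    _ ≤ Real.sqrt ((∑ i, x i ^ 2) * ∑ i, y i ^ 2) := Real.sqrt_le_sqrt (by
        simpa [dotProduct] using h)
    _ = vnorm x * vnorm y := by
        rw [Real.sqrt_mul (sumsq_nonneg x)]; rfl

lemma vnorm_smul (c : ℝ) (x : Fin n → ℝ) : vnorm (c • x) = |c| * vnorm x := by
  unfold vnorm
  rw [← Real.sqrt_sq_eq_abs, ← Real.sqrt_mul (sq_nonneg c), Finset.mul_sum]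
  congr 1
  refine Finset.sum_congr rfl fun i _ => ?_
  simp [mul_pow]

lemma vnorm_neg (x : Fin n → ℝ) : vnorm (-x) = vnorm x := by
  unfold vnorm
  congr 1
  refine Finset.sum_congr rfl fun i _ => ?_
  simp

lemma vnorm_add_le (x y : Fin n → ℝ) : vnorm (x + y) ≤ vnorm x + vnorm y := by
  have hd : (x + y) ⬝ᵥ (x + y) = x ⬝ᵥ x + 2 * (x ⬝ᵥ y) + y ⬝ᵥ y := by
    simp [add_dotProduct, dotProduct_add, dotProduct_comm y x]; ring
  have h1 : (x + y) ⬝ᵥ (x + y) ≤ (vnorm x + vnorm y) ^ 2 := by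
    rw [hd]
    have := dot_le x y
    have hx := vnorm_sq x; have hy := vnorm_sq y
    rw [← dot_self] at hx hy
    nlinarith
  rw [vnorm_eq_sqrt_dot]
  calc Real.sqrt ((x+y) ⬝ᵥ (x+y)) ≤ Real.sqrt ((vnorm x + vnorm y)^2) :=
        Real.sqrt_le_sqrt h1
    _ = vnorm x + vnorm y := Real.sqrt_sq (by
          have := vnorm_nonneg x; have := vnorm_nonneg y; linarith)

lemma vnorm_sub_le_add (x y : Fin n → ℝ) : vnorm x - vnorm y ≤ vnorm (x + y) := by
  have := vnorm_add_le (x + y) (-y)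
  simp only [add_neg_cancel_right] at this
  rw [vnorm_neg] at this; linarith

lemma vnorm_eq_zero {x : Fin n → ℝ} (h : vnorm x = 0) : x = 0 := by
  have := vnorm_sq x
  rw [h] at this
  have : ∑ i, x i ^ 2 = 0 := by linarith [this]
  funext i
  have hi := (Finset.sum_eq_zero_iff_of_nonneg (fun i _ => sq_nonneg (x i))).mp this i (Finset.mem_univ i)
  exact pow_eq_zero_iff (by norm_num) |>.mp hi

-- adjoint identity
lemma dot_mulVec_transpose (A : Matrix (Fin m) (Fin n) ℝ) (x : Fin n → ℝ) (y : Fin m → ℝ) :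
    (A *ᵥ x) ⬝ᵥ y = x ⬝ᵥ (Aᵀ *ᵥ y) := by
  rw [dotProduct_comm, Matrix.dotProduct_mulVec, ← Matrix.vecMul_transpose, Matrix.transpose_transpose,
    dotProduct_comm]

-- isometry columns
lemma vnorm_mulVec_iso {A : Matrix (Fin m) (Fin n) ℝ} (hA : Aᵀ * A = 1) (x : Fin n → ℝ) :
    vnorm (A *ᵥ x) = vnorm x := by
  rw [vnorm_eq_sqrt_dot, vnorm_eq_sqrt_dot x]
  congr 1
  rw [dot_mulVec_transpose, Matrix.mulVec_mulVec, hA, Matrix.one_mulVec]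

lemma vnorm_transpose_mulVec_le {A : Matrix (Fin m) (Fin n) ℝ} (hA : Aᵀ * A = 1)
    (z : Fin m → ℝ) : vnorm (Aᵀ *ᵥ z) ≤ vnorm z := by
  rcases le_or_gt (vnorm (Aᵀ *ᵥ z)) 0 with h | h
  · exact h.trans (vnorm_nonneg z)
  · have key : vnorm (Aᵀ *ᵥ z) ^ 2 ≤ vnorm z * vnorm (Aᵀ *ᵥ z) := by
      have h1 : vnorm (Aᵀ *ᵥ z) ^ 2 = (Aᵀ *ᵥ z) ⬝ᵥ (Aᵀ *ᵥ z) := by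
        rw [vnorm_sq, dot_self]
      have h2 : (Aᵀ *ᵥ z) ⬝ᵥ (Aᵀ *ᵥ z) = z ⬝ᵥ (A *ᵥ (Aᵀ *ᵥ z)) := by
        have := dot_mulVec_transpose Aᵀ z (Aᵀ *ᵥ z)
        rw [Matrix.transpose_transpose] at this
        rw [this, dotProduct_comm]
      have h3 : z ⬝ᵥ (A *ᵥ (Aᵀ *ᵥ z)) ≤ vnorm z * vnorm (A *ᵥ (Aᵀ *ᵥ z)) := dot_le _ _
      rw [vnorm_mulVec_iso hA] at h3
      rw [h1, h2]; exact h3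
    nlinarith

end VN
/-- Spectral norm (ℓ₂ operator norm) of a real matrix. -/
noncomputable def specNorm {m n : ℕ} (A : Matrix (Fin m) (Fin n) ℝ) : ℝ :=
  sSup {t | ∃ x : Fin n → ℝ, vnorm x = 1 ∧ t = vnorm (A.mulVec x)}

/-- `k`-th largest singular value of a real matrix, via the Courant–Fischer
max–min characterization. -/
noncomputable def singVal {m n : ℕ} (A : Matrix (Fin m) (Fin n) ℝ) (k : ℕ) : ℝ :=
  sSup {t | ∃ S : Submodule ℝ (Fin n → ℝ), Module.finrank ℝ S = k ∧
    t = sInf {s | ∃ x ∈ S, vnorm x = 1 ∧ s = vnorm (A.mulVec x)}}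

namespace VN
variable {m n p : ℕ}

/-- a unit vector, when n ≥ 1 -/
lemma vnorm_zero : vnorm (0 : Fin n → ℝ) = 0 := by
  unfold vnorm; simp

lemma exists_unit (hn : 0 < n) : ∃ x : Fin n → ℝ, vnorm x = 1 := by
  set e : Fin n → ℝ := fun i => if i = ⟨0, hn⟩ then 1 else 0 with he
  refine ⟨e, ?_⟩
  have hsum : (∑ i, e i ^ 2) = 1 := by
    rw [Finset.sum_eq_single ⟨0, hn⟩]
    · simp [he]
    · intro b _ hb; simp [he, hb]
    · intro h; exact absurd (Finset.mem_univ _) h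
  unfold vnorm
  rw [hsum]
  exact Real.sqrt_one

lemma frob_bound (A : Matrix (Fin m) (Fin n) ℝ) {x : Fin n → ℝ} (hx : vnorm x = 1) :
    vnorm (A *ᵥ x) ≤ Real.sqrt (∑ i, ∑ j, A i j ^ 2) := by
  unfold vnorm
  apply Real.sqrt_le_sqrt
  have hx2 : ∑ j, x j ^ 2 = 1 := by
    have := vnorm_sq x; rw [hx] at this; linarith
  refine Finset.sum_le_sum fun i _ => ?_
  have h := Finset.sum_mul_sq_le_sq_mul_sq Finset.univ (fun j => A i j) x
  rw [hx2, mul_one] at h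
  simpa [Matrix.mulVec, dotProduct] using h

lemma specSet_bddAbove (A : Matrix (Fin m) (Fin n) ℝ) :
    BddAbove {t | ∃ x : Fin n → ℝ, vnorm x = 1 ∧ t = vnorm (A.mulVec x)} := by
  refine ⟨Real.sqrt (∑ i, ∑ j, A i j ^ 2), ?_⟩
  rintro t ⟨x, hx, rfl⟩
  exact frob_bound A hx

lemma le_specNorm (A : Matrix (Fin m) (Fin n) ℝ) {x : Fin n → ℝ} (hx : vnorm x = 1) :
    vnorm (A *ᵥ x) ≤ specNorm A :=
  le_csSup (specSet_bddAbove A) ⟨x, hx, rfl⟩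

lemma specNorm_nonneg (hn : 0 < n) (A : Matrix (Fin m) (Fin n) ℝ) : 0 ≤ specNorm A := by
  obtain ⟨x, hx⟩ := exists_unit hn
  exact (vnorm_nonneg _).trans (le_specNorm A hx)

lemma specNorm_le (hn : 0 < n) {A : Matrix (Fin m) (Fin n) ℝ} {c : ℝ}
    (h : ∀ x : Fin n → ℝ, vnorm x = 1 → vnorm (A *ᵥ x) ≤ c) : specNorm A ≤ c := by
  obtain ⟨x, hx⟩ := exists_unit hn
  exact csSup_le ⟨_, ⟨x, hx, rfl⟩⟩ (by rintro t ⟨y, hy, rfl⟩; exact h y hy)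

lemma vnorm_mulVec_le (hn : 0 < n) (A : Matrix (Fin m) (Fin n) ℝ) (x : Fin n → ℝ) :
    vnorm (A *ᵥ x) ≤ specNorm A * vnorm x := by
  rcases eq_or_ne x 0 with rfl | hx
  · simp [Matrix.mulVec_zero, vnorm_zero]
  · have hpos : 0 < vnorm x := by
      rcases (vnorm_nonneg x).lt_or_eq with h | h
      · exact h
      · exact absurd (vnorm_eq_zero h.symm) hx
    have hunit : vnorm ((vnorm x)⁻¹ • x) = 1 := by
      rw [vnorm_smul, abs_of_pos (inv_pos.mpr hpos), inv_mul_cancel₀ hpos.ne']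
    have := le_specNorm A hunit
    rw [Matrix.mulVec_smul, vnorm_smul, abs_of_pos (inv_pos.mpr hpos)] at this
    calc vnorm (A *ᵥ x) = vnorm x * ((vnorm x)⁻¹ * vnorm (A *ᵥ x)) := by
          field_simp
      _ ≤ vnorm x * specNorm A := by
          exact mul_le_mul_of_nonneg_left this hpos.le
      _ = specNorm A * vnorm x := mul_comm _ _

/-- for a square matrix, singVal at full index is the min singular value -/
lemma singVal_square (B : Matrix (Fin n) (Fin n) ℝ) :
    singVal B n = sInf {s | ∃ x : Fin n → ℝ, vnorm x = 1 ∧ s = vnorm (B *ᵥ x)} := by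
  unfold singVal
  have hset : {t | ∃ S : Submodule ℝ (Fin n → ℝ), Module.finrank ℝ S = n ∧
      t = sInf {s | ∃ x ∈ S, vnorm x = 1 ∧ s = vnorm (B.mulVec x)}}
      = {sInf {s | ∃ x : Fin n → ℝ, vnorm x = 1 ∧ s = vnorm (B *ᵥ x)}} := by
    ext t
    simp only [Set.mem_setOf_eq, Set.mem_singleton_iff]
    constructor
    · rintro ⟨S, hS, rfl⟩
      have hStop : S = ⊤ := Submodule.eq_top_of_finrank_eq (by
        rw [hS]; simp [Module.finrank_fintype_fun_eq_card])
      subst hStop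
      congr 1
      ext s
      simp
    · rintro rfl
      refine ⟨⊤, by simp [Module.finrank_fintype_fun_eq_card], ?_⟩
      congr 1
      ext s
      simp
  rw [hset, csSup_singleton]

lemma singVal_set_bddBelow (B : Matrix (Fin m) (Fin n) ℝ) :
    BddBelow {s | ∃ x : Fin n → ℝ, vnorm x = 1 ∧ s = vnorm (B *ᵥ x)} := by
  refine ⟨0, ?_⟩
  rintro s ⟨x, hx, rfl⟩
  exact vnorm_nonneg _

lemma singVal_square_le (B : Matrix (Fin n) (Fin n) ℝ) {x : Fin n → ℝ} (hx : vnorm x = 1) :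
    singVal B n ≤ vnorm (B *ᵥ x) := by
  rw [singVal_square]
  exact csInf_le (singVal_set_bddBelow B) ⟨x, hx, rfl⟩

lemma le_singVal_square (hn : 0 < n) (B : Matrix (Fin n) (Fin n) ℝ) {c : ℝ}
    (h : ∀ x : Fin n → ℝ, vnorm x = 1 → c ≤ vnorm (B *ᵥ x)) : c ≤ singVal B n := by
  rw [singVal_square]
  obtain ⟨x, hx⟩ := exists_unit hn
  exact le_csInf ⟨_, ⟨x, hx, rfl⟩⟩ (by rintro s ⟨y, hy, rfl⟩; exact h y hy)

lemma singVal_square_nonneg (hn : 0 < n) (B : Matrix (Fin n) (Fin n) ℝ) :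
    0 ≤ singVal B n :=
  le_singVal_square hn B fun x _ => vnorm_nonneg _

/-- scaled lower bound -/
lemma singVal_square_mulVec_ge (B : Matrix (Fin n) (Fin n) ℝ) (x : Fin n → ℝ) :
    singVal B n * vnorm x ≤ vnorm (B *ᵥ x) := by
  rcases eq_or_ne x 0 with rfl | hx
  · simp [Matrix.mulVec_zero, vnorm_zero]
  · have hpos : 0 < vnorm x := by
      rcases (vnorm_nonneg x).lt_or_eq with h | h
      · exact h
      · exact absurd (vnorm_eq_zero h.symm) hx
    have hunit : vnorm ((vnorm x)⁻¹ • x) = 1 := by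
      rw [vnorm_smul, abs_of_pos (inv_pos.mpr hpos), inv_mul_cancel₀ hpos.ne']
    have := singVal_square_le B hunit
    rw [Matrix.mulVec_smul, vnorm_smul, abs_of_pos (inv_pos.mpr hpos)] at this
    calc singVal B n * vnorm x ≤ ((vnorm x)⁻¹ * vnorm (B *ᵥ x)) * vnorm x :=
          mul_le_mul_of_nonneg_right this hpos.le
      _ = vnorm (B *ᵥ x) := by field_simp

end VN
namespace VN
variable {m n p N r : ℕ}

lemma exists_finrank_submodule (hrN : r ≤ N) :
    ∃ S : Submodule ℝ (Fin N → ℝ), Module.finrank ℝ S = r := by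
  have hli : LinearIndependent ℝ (fun i : Fin r => Pi.basisFun ℝ (Fin N) (Fin.castLE hrN i)) :=
    (Pi.basisFun ℝ (Fin N)).linearIndependent.comp _ (Fin.castLE_injective hrN)
  refine ⟨Submodule.span ℝ (Set.range fun i : Fin r => Pi.basisFun ℝ (Fin N) (Fin.castLE hrN i)), ?_⟩
  rw [finrank_span_eq_card hli, Fintype.card_fin]

/-- computation: if Uᵀx is supported on coordinate i₀ and ‖x‖ = 1 then ‖UΛUᵀ x‖ ≤ |λ i₀| -/
lemma diag_bound {Ustar : Matrix (Fin N) (Fin r) ℝ} (hU : Ustarᵀ * Ustar = 1)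
    (lam : Fin r → ℝ) (i₀ : Fin r) {x : Fin N → ℝ} (hx : vnorm x = 1)
    (hsupp : ∀ j, j ≠ i₀ → (Ustarᵀ *ᵥ x) j = 0) :
    vnorm ((Ustar * Matrix.diagonal lam * Ustarᵀ) *ᵥ x) ≤ |lam i₀| := by
  set w := Ustarᵀ *ᵥ x with hw
  have h1 : (Ustar * Matrix.diagonal lam * Ustarᵀ) *ᵥ x
      = Ustar *ᵥ (Matrix.diagonal lam *ᵥ w) := by
    rw [Matrix.mulVec_mulVec, Matrix.mulVec_mulVec, Matrix.mul_assoc]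
  rw [h1, vnorm_mulVec_iso hU]
  have hwle : vnorm w ≤ 1 := by
    have := vnorm_transpose_mulVec_le hU x
    rw [hx] at this; exact this
  have hsum : ∑ j, (Matrix.diagonal lam *ᵥ w) j ^ 2 = lam i₀ ^ 2 * w i₀ ^ 2 := by
    rw [Finset.sum_eq_single i₀]
    · rw [Matrix.mulVec_diagonal]; ring
    · intro b _ hb
      rw [Matrix.mulVec_diagonal, hsupp b hb]; ring
    · intro h; exact absurd (Finset.mem_univ _) h
  have hwi : w i₀ ^ 2 ≤ 1 := by
    have h2 : w i₀ ^ 2 ≤ ∑ j, w j ^ 2 :=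
      Finset.single_le_sum (fun j _ => sq_nonneg (w j)) (Finset.mem_univ i₀)
    have h3 : ∑ j, w j ^ 2 = vnorm w ^ 2 := (vnorm_sq w).symm
    nlinarith [vnorm_nonneg w]
  unfold vnorm
  rw [hsum, ← Real.sqrt_sq_eq_abs]
  apply Real.sqrt_le_sqrt
  nlinarith [sq_nonneg (lam i₀)]

lemma singVal_M_le (hr : 0 < r) (hrN : r ≤ N)
    {Ustar : Matrix (Fin N) (Fin r) ℝ} (hU : Ustarᵀ * Ustar = 1)
    (lam : Fin r → ℝ) (i₀ : Fin r) :
    singVal (Ustar * Matrix.diagonal lam * Ustarᵀ) r ≤ |lam i₀| := by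
  set M := Ustar * Matrix.diagonal lam * Ustarᵀ with hM
  unfold singVal
  obtain ⟨S₀, hS₀⟩ := exists_finrank_submodule (N := N) (r := r) hrN
  have hne : {t | ∃ S : Submodule ℝ (Fin N → ℝ), Module.finrank ℝ S = r ∧
      t = sInf {s | ∃ x ∈ S, vnorm x = 1 ∧ s = vnorm (M *ᵥ x)}}.Nonempty :=
    ⟨sInf {s | ∃ x ∈ S₀, vnorm x = 1 ∧ s = vnorm (M *ᵥ x)}, S₀, hS₀, rfl⟩
  apply csSup_le hne
  rintro t ⟨S, hS, rfl⟩
  -- build V = ker L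
  set L : (Fin N → ℝ) →ₗ[ℝ] ({j : Fin r // j ≠ i₀} → ℝ) :=
    (LinearMap.funLeft ℝ ℝ (fun j : {j : Fin r // j ≠ i₀} => (j : Fin r))).comp
      (Matrix.mulVecLin Ustarᵀ) with hL
  have hLdef : ∀ (x : Fin N → ℝ) (j : {j : Fin r // j ≠ i₀}), L x j = (Ustarᵀ *ᵥ x) (j : Fin r) :=
    fun x j => rfl
  have hkermem : ∀ x, x ∈ LinearMap.ker L ↔ ∀ j, j ≠ i₀ → (Ustarᵀ *ᵥ x) j = 0 := by
    intro x
    rw [LinearMap.mem_ker]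
    constructor
    · intro h j hj
      have h2 := congrFun h ⟨j, hj⟩
      rw [hLdef] at h2
      exact h2
    · intro h
      funext j
      rw [Pi.zero_apply, hLdef]
      exact h j j.2
  have hrkN : Module.finrank ℝ (Fin N → ℝ) = N := by
    simp [Module.finrank_fintype_fun_eq_card]
  have hVrank : N - (r - 1) ≤ Module.finrank ℝ (LinearMap.ker L) := by
    have h1 := LinearMap.finrank_range_add_finrank_ker L
    have h2 : Module.finrank ℝ (LinearMap.range L) ≤ r - 1 := by
      have := Submodule.finrank_le (LinearMap.range L)
      have hcard : Module.finrank ℝ ({j : Fin r // j ≠ i₀} → ℝ) = r - 1 := by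
        rw [Module.finrank_fintype_fun_eq_card]
        rw [Fintype.card_subtype_compl, Fintype.card_subtype_eq, Fintype.card_fin]
      omega
    rw [hrkN] at h1
    omega
  have hinter : 0 < Module.finrank ℝ (S ⊓ LinearMap.ker L : Submodule ℝ (Fin N → ℝ)) := by
    have h1 := Submodule.finrank_sup_add_finrank_inf_eq S (LinearMap.ker L)
    have h2 : Module.finrank ℝ (S ⊔ LinearMap.ker L : Submodule ℝ (Fin N → ℝ)) ≤ N := by
      have := Submodule.finrank_le (S ⊔ LinearMap.ker L)
      omega
    omega
  obtain ⟨x, hxne⟩ := Module.finrank_pos_iff_exists_ne_zero.mp hinter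
  have hxS : (x : Fin N → ℝ) ∈ S := x.2.1
  have hxV : (x : Fin N → ℝ) ∈ LinearMap.ker L := x.2.2
  have hxne0 : (x : Fin N → ℝ) ≠ 0 := fun h => hxne (Subtype.ext h)
  have hpos : 0 < vnorm (x : Fin N → ℝ) := by
    rcases (vnorm_nonneg (x : Fin N → ℝ)).lt_or_eq with h | h
    · exact h
    · exact absurd (vnorm_eq_zero h.symm) hxne0
  set y : Fin N → ℝ := (vnorm (x : Fin N → ℝ))⁻¹ • (x : Fin N → ℝ) with hy
  have hyu : vnorm y = 1 := by
    rw [hy, vnorm_smul, abs_of_pos (inv_pos.mpr hpos), inv_mul_cancel₀ hpos.ne']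
  have hyS : y ∈ S := S.smul_mem _ hxS
  have hyV : y ∈ LinearMap.ker L := (LinearMap.ker L).smul_mem _ hxV
  have hval : vnorm (M *ᵥ y) ≤ |lam i₀| :=
    diag_bound hU lam i₀ hyu ((hkermem y).mp hyV)
  have hb : BddBelow {s | ∃ x ∈ S, vnorm x = 1 ∧ s = vnorm (M *ᵥ x)} := by
    refine ⟨0, ?_⟩
    rintro s ⟨z, _, _, rfl⟩
    exact vnorm_nonneg _
  exact (csInf_le hb ⟨y, hyS, hyu, rfl⟩).trans hval

end VN
set_option maxHeartbeats 2000000 in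
open VN in
/-- Subspace-error (tangent of canonical angle) contraction step. -/
theorem stmt12 (N r : ℕ) (hr1 : 1 ≤ r) (hrN : r ≤ N)
    (Ustar : Matrix (Fin N) (Fin r) ℝ) (Ustarp : Matrix (Fin N) (Fin (N - r)) ℝ)
    (lam : Fin r → ℝ) (hlam : ∀ i, lam i ≠ 0)
    (hU : Ustarᵀ * Ustar = 1) (hUp1 : Ustarᵀ * Ustarp = 0) (hUp2 : Ustarpᵀ * Ustarp = 1)
    (Mstar : Matrix (Fin N) (Fin N) ℝ)
    (hM : Mstar = Ustar * Matrix.diagonal lam * Ustarᵀ)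
    (U : Matrix (Fin N) (Fin r) ℝ) (hU2 : Uᵀ * U = 1)
    (E : Matrix (Fin N) (Fin N) ℝ)
    (hgap : 0 < singVal Mstar r * singVal (Ustarᵀ * U) r - specNorm E)
    (A : Matrix (Fin N) (Fin r) ℝ) (hA : A = (Mstar + E) * U) :
    IsUnit (Ustarᵀ * A).det ∧
      specNorm (Ustarpᵀ * A * (Ustarᵀ * A)⁻¹) ≤
        specNorm E / (singVal Mstar r * singVal (Ustarᵀ * U) r - specNorm E) ∧
      (1 / Real.sqrt 5 ≤ singVal (Ustarᵀ * U) r →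
        specNorm E ≤ singVal Mstar r / (2 * Real.sqrt 5) →
        specNorm (Ustarpᵀ * A * (Ustarᵀ * A)⁻¹) ≤
          2 * Real.sqrt 5 * specNorm E / singVal Mstar r) := by
  have hrpos : 0 < r := hr1
  have hNpos : 0 < N := lt_of_lt_of_le hrpos hrN
  set σM := singVal Mstar r with hσM'
  set σU := singVal (Ustarᵀ * U) r with hσU'
  set ε := specNorm E with hε'
  set g := σM * σU - ε with hg'
  have hgpos : 0 < g := hgap
  have hεnn : 0 ≤ ε := specNorm_nonneg hNpos E
  have hσU0 : 0 ≤ σU := singVal_square_nonneg hrpos _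
  -- minimal |lam|
  obtain ⟨i₀, -, hi₀⟩ := Finset.exists_min_image Finset.univ (fun i => |lam i|)
    ⟨⟨0, hrpos⟩, Finset.mem_univ _⟩
  have hσMle : σM ≤ |lam i₀| := by
    rw [hσM', hM]; exact singVal_M_le hrpos hrN hU lam i₀
  -- matrix identities
  have hUpU : Ustarpᵀ * Ustar = 0 := by
    have h := congrArg Matrix.transpose hUp1
    rw [Matrix.transpose_mul, Matrix.transpose_transpose, Matrix.transpose_zero] at h
    exact h
  have hB : Ustarᵀ * A = Matrix.diagonal lam * (Ustarᵀ * U) + Ustarᵀ * (E * U) := by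
    subst hA; subst hM
    simp only [Matrix.add_mul, Matrix.mul_add, ← Matrix.mul_assoc, hU, Matrix.one_mul]
  have hC : Ustarpᵀ * A = Ustarpᵀ * (E * U) := by
    subst hA; subst hM
    simp only [Matrix.add_mul, Matrix.mul_add, ← Matrix.mul_assoc, hUpU,
      Matrix.zero_mul, zero_mul, zero_add]
  -- key lower bound on (Ustarᵀ A) x
  have hBlow : ∀ x : Fin r → ℝ, vnorm x = 1 → g ≤ vnorm ((Ustarᵀ * A) *ᵥ x) := by
    intro x hx
    rw [hB, Matrix.add_mulVec]
    set w := (Ustarᵀ * U) *ᵥ x with hw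
    have ht1 : (Matrix.diagonal lam * (Ustarᵀ * U)) *ᵥ x = Matrix.diagonal lam *ᵥ w := by
      rw [hw, Matrix.mulVec_mulVec]
    have hdiag : |lam i₀| * vnorm w ≤ vnorm (Matrix.diagonal lam *ᵥ w) := by
      have h1 : (|lam i₀| * vnorm w) ^ 2 ≤ vnorm (Matrix.diagonal lam *ᵥ w) ^ 2 := by
        rw [mul_pow, sq_abs, vnorm_sq, vnorm_sq]
        rw [Finset.mul_sum]
        refine Finset.sum_le_sum fun j _ => ?_
        rw [Matrix.mulVec_diagonal]
        have h2 : lam i₀ ^ 2 ≤ lam j ^ 2 := by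
          have := hi₀ j (Finset.mem_univ j)
          nlinarith [abs_nonneg (lam i₀), abs_nonneg (lam j), sq_abs (lam i₀), sq_abs (lam j)]
        rw [mul_pow]
        exact mul_le_mul_of_nonneg_right h2 (sq_nonneg _)
      have h3 : 0 ≤ |lam i₀| * vnorm w := mul_nonneg (abs_nonneg _) (vnorm_nonneg _)
      nlinarith [vnorm_nonneg (Matrix.diagonal lam *ᵥ w)]
    have hwlow : σU ≤ vnorm w := singVal_square_le (Ustarᵀ * U) hx
    have ht1low : σM * σU ≤ vnorm ((Matrix.diagonal lam * (Ustarᵀ * U)) *ᵥ x) := by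
      rw [ht1]
      calc σM * σU ≤ |lam i₀| * σU := mul_le_mul_of_nonneg_right hσMle hσU0
        _ ≤ |lam i₀| * vnorm w := mul_le_mul_of_nonneg_left hwlow (abs_nonneg _)
        _ ≤ vnorm (Matrix.diagonal lam *ᵥ w) := hdiag
    have ht2 : vnorm ((Ustarᵀ * (E * U)) *ᵥ x) ≤ ε := by
      have he : (Ustarᵀ * (E * U)) *ᵥ x = Ustarᵀ *ᵥ (E *ᵥ (U *ᵥ x)) := by
        rw [Matrix.mulVec_mulVec, Matrix.mulVec_mulVec, Matrix.mul_assoc]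
      rw [he]
      calc vnorm (Ustarᵀ *ᵥ (E *ᵥ (U *ᵥ x))) ≤ vnorm (E *ᵥ (U *ᵥ x)) :=
            vnorm_transpose_mulVec_le hU _
        _ ≤ ε * vnorm (U *ᵥ x) := vnorm_mulVec_le hNpos E _
        _ = ε := by rw [vnorm_mulVec_iso hU2, hx, mul_one]
    have htri := vnorm_sub_le_add ((Matrix.diagonal lam * (Ustarᵀ * U)) *ᵥ x)
      ((Ustarᵀ * (E * U)) *ᵥ x)
    rw [hg']
    linarith
  -- invertibility
  have hdet : IsUnit (Ustarᵀ * A).det := by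
    rw [isUnit_iff_ne_zero]
    intro hzero
    obtain ⟨v, hv0, hv⟩ := Matrix.exists_mulVec_eq_zero_iff.mpr hzero
    have hσB : g ≤ singVal (Ustarᵀ * A) r := le_singVal_square hrpos _ hBlow
    have h1 := singVal_square_mulVec_ge (Ustarᵀ * A) v
    rw [hv, vnorm_zero] at h1
    have hvpos : 0 < vnorm v := by
      rcases (vnorm_nonneg v).lt_or_eq with h | h
      · exact h
      · exact absurd (vnorm_eq_zero h.symm) hv0
    nlinarith
  have hBinvmul : (Ustarᵀ * A) * (Ustarᵀ * A)⁻¹ = 1 := Matrix.mul_nonsing_inv _ hdet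
  -- inverse norm bound
  have hinv : ∀ y : Fin r → ℝ, vnorm ((Ustarᵀ * A)⁻¹ *ᵥ y) ≤ vnorm y / g := by
    intro y
    set z := (Ustarᵀ * A)⁻¹ *ᵥ y with hz
    have hBz : (Ustarᵀ * A) *ᵥ z = y := by
      rw [hz, Matrix.mulVec_mulVec, hBinvmul, Matrix.one_mulVec]
    have hσB : g ≤ singVal (Ustarᵀ * A) r := le_singVal_square hrpos _ hBlow
    have h1 := singVal_square_mulVec_ge (Ustarᵀ * A) z
    rw [hBz] at h1
    rw [le_div_iff₀ hgpos]
    calc vnorm z * g = g * vnorm z := mul_comm _ _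
      _ ≤ singVal (Ustarᵀ * A) r * vnorm z :=
          mul_le_mul_of_nonneg_right hσB (vnorm_nonneg _)
      _ ≤ vnorm y := h1
  -- main spectral bound
  have hmain : specNorm (Ustarpᵀ * A * (Ustarᵀ * A)⁻¹) ≤ ε / g := by
    apply specNorm_le hrpos
    intro x hx
    have hsplit : (Ustarpᵀ * A * (Ustarᵀ * A)⁻¹) *ᵥ x
        = Ustarpᵀ *ᵥ (E *ᵥ (U *ᵥ ((Ustarᵀ * A)⁻¹ *ᵥ x))) := by
      rw [hC]
      simp only [← Matrix.mulVec_mulVec]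
    rw [hsplit]
    set z := (Ustarᵀ * A)⁻¹ *ᵥ x with hz
    have hzle : vnorm z ≤ 1 / g := by
      have := hinv x
      rw [hx] at this
      exact this
    calc vnorm (Ustarpᵀ *ᵥ (E *ᵥ (U *ᵥ z))) ≤ vnorm (E *ᵥ (U *ᵥ z)) :=
          vnorm_transpose_mulVec_le hUp2 _
      _ ≤ ε * vnorm (U *ᵥ z) := vnorm_mulVec_le hNpos E _
      _ = ε * vnorm z := by rw [vnorm_mulVec_iso hU2]
      _ ≤ ε * (1 / g) := mul_le_mul_of_nonneg_left hzle hεnn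
      _ = ε / g := by ring
  refine ⟨hdet, hmain, ?_⟩
  -- part 3
  intro hcos hE
  have h5 : (0:ℝ) < Real.sqrt 5 := Real.sqrt_pos.mpr (by norm_num)
  have hσMpos : 0 < σM := by
    by_contra h
    push_neg at h
    have : σM * σU ≤ 0 := mul_nonpos_of_nonpos_of_nonneg h hσU0
    rw [hg'] at hgpos
    linarith
  have hglow : σM / (2 * Real.sqrt 5) ≤ g := by
    have h1 : σM * (1 / Real.sqrt 5) ≤ σM * σU := mul_le_mul_of_nonneg_left hcos hσMpos.le
    have h2 : σM * (1 / Real.sqrt 5) = σM / Real.sqrt 5 := by ring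
    have h3 : σM / Real.sqrt 5 - σM / (2 * Real.sqrt 5) = σM / (2 * Real.sqrt 5) := by
      field_simp
      ring
    rw [hg']
    have h4 : σM / Real.sqrt 5 ≤ σM * σU := by rw [← h2]; exact h1
    linarith
  have hglow2 : 0 < σM / (2 * Real.sqrt 5) := by positivity
  have hfinal : ε / g ≤ 2 * Real.sqrt 5 * ε / σM := by
    calc ε / g ≤ ε / (σM / (2 * Real.sqrt 5)) :=
          div_le_div_of_nonneg_left hεnn hglow2 hglow
      _ = 2 * Real.sqrt 5 * ε / σM := by
          rw [div_div_eq_mul_div]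
          ring
  exact hmain.trans hfinal
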